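/- arXiv:2006.02710 — 4 statements merged into one kernel-verified Lean document; each statement's English description precedes it below -/
import Mathlib

section
/- Under the Hölder-type bound on ∂_x^α W, one has ρ∫₀¹|(∂_x^α W)(t-θρ, x-θ(x-y))|dθ ≤ C_α^{1/p_α} ρ^{1-1/p_α} (T + ρ∫₀¹ W(t-θρ, x-θ(x-y))dθ)^{1/p_α} for all 0 ≤ s ≤ t ≤ T and x,y ∈ ℝ^d, where ρ = t-s. -/
/-- Partial derivative in the `i`-th coordinate direction. -/
noncomputable def pd {d : ℕ} (i : Fin d) (f : EuclideanSpace ℝ (Fin d) → ℝ) :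
    EuclideanSpace ℝ (Fin d) → ℝ :=
  fun x => fderiv ℝ f x (EuclideanSpace.single i 1)

/-- Multi-index derivative `∂_x^α`, encoded by the list of coordinate directions. -/
noncomputable def mderiv {d : ℕ} (l : List (Fin d)) (f : EuclideanSpace ℝ (Fin d) → ℝ) :
    EuclideanSpace ℝ (Fin d) → ℝ :=
  l.foldr pd f

theorem stmt3 (d : ℕ) (T : ℝ) (hT : 0 < T)
    (W : ℝ → EuclideanSpace ℝ (Fin d) → ℝ)
    (hWsmooth : ∀ t, ContDiff ℝ (⊤ : ℕ∞) (W t))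
    (hWcont : Continuous fun p : ℝ × EuclideanSpace ℝ (Fin d) => W p.1 p.2)
    (hWnonneg : ∀ t ∈ Set.Icc (0:ℝ) T, ∀ x, 0 ≤ W t x)
    (α : List (Fin d)) (hα : α ≠ [])
    (Cα pα : ℝ) (hCα : 0 ≤ Cα) (hpα : 1 < pα)
    (hbound : ∀ t ∈ Set.Icc (0:ℝ) T, ∀ x,
      |mderiv α (W t) x| ^ pα ≤ Cα * (1 + W t x)) :
    ∀ s t : ℝ, 0 ≤ s → s ≤ t → t ≤ T →
      ∀ x y : EuclideanSpace ℝ (Fin d),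
        (t - s) * ∫ θ in (0:ℝ)..1, |mderiv α (W (t - θ * (t - s))) (x - θ • (x - y))| ≤
          Cα ^ (1 / pα) * (t - s) ^ (1 - 1 / pα) *
            (T + (t - s) * ∫ θ in (0:ℝ)..1, W (t - θ * (t - s)) (x - θ • (x - y)))
              ^ (1 / pα) := by
  intro s t hs hst htT x y
  have hp0 : (0:ℝ) < pα := lt_trans one_pos hpα
  set ρ : ℝ := t - s with hρdef
  have hρ0 : 0 ≤ ρ := sub_nonneg.2 hst
  have hρT : ρ ≤ T := by simp only [hρdef]; linarith
  set g : ℝ → ℝ := fun θ => |mderiv α (W (t - θ * ρ)) (x - θ • (x - y))| with hgdef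
  set f : ℝ → ℝ := fun θ => W (t - θ * ρ) (x - θ • (x - y)) with hfdef
  have hmem : ∀ θ ∈ Set.Icc (0:ℝ) 1, t - θ * ρ ∈ Set.Icc (0:ℝ) T := by
    intro θ hθ
    constructor
    · nlinarith [hθ.1, hθ.2]
    · nlinarith [hθ.1, hθ.2]
  have hfc : Continuous f := by
    have hc : Continuous fun θ : ℝ =>
        ((t - θ * ρ, x - θ • (x - y)) : ℝ × EuclideanSpace ℝ (Fin d)) := by fun_prop
    exact hWcont.comp hc
  have hfnn : ∀ θ ∈ Set.Icc (0:ℝ) 1, 0 ≤ f θ := fun θ hθ => hWnonneg _ (hmem θ hθ) _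
  have hB : 0 ≤ ∫ θ in (0:ℝ)..1, f θ := intervalIntegral.integral_nonneg zero_le_one hfnn
  have hbase : (0:ℝ) ≤ T + ρ * ∫ θ in (0:ℝ)..1, f θ :=
    add_nonneg hT.le (mul_nonneg hρ0 hB)
  have hRHS : (0:ℝ) ≤ Cα ^ (1 / pα) * ρ ^ (1 - 1 / pα) *
      (T + ρ * ∫ θ in (0:ℝ)..1, f θ) ^ (1 / pα) :=
    mul_nonneg (mul_nonneg (Real.rpow_nonneg hCα _) (Real.rpow_nonneg hρ0 _))
      (Real.rpow_nonneg hbase _)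
  by_cases hint : IntervalIntegrable g MeasureTheory.volume 0 1
  swap
  · rw [intervalIntegral.integral_undef hint, mul_zero]
    exact hRHS
  rcases eq_or_lt_of_le hρ0 with hρz | hρpos
  · rw [← hρz] at hRHS
    rw [← hρz, zero_mul]
    exact hRHS
  -- Main case
  set μ := MeasureTheory.volume.restrict (Set.Ioc (0:ℝ) 1) with hμ
  haveI : MeasureTheory.IsProbabilityMeasure μ := by
    constructor
    simp [hμ, Real.volume_Ioc]
  have hgint : MeasureTheory.Integrable g μ := hint.1
  have hgnn : ∀ θ, 0 ≤ g θ := fun θ => abs_nonneg _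
  have hφc : Continuous fun z : ℝ => z ^ pα :=
    continuous_iff_continuousAt.2 fun z => Real.continuousAt_rpow_const z pα (Or.inr hp0.le)
  have hCf_int : MeasureTheory.Integrable (fun θ => Cα * (1 + f θ)) μ :=
    ((continuous_const.mul (continuous_const.add hfc)).integrableOn_Ioc)
  have haemem : ∀ᵐ θ ∂μ, θ ∈ Set.Ioc (0:ℝ) 1 :=
    MeasureTheory.ae_restrict_mem measurableSet_Ioc
  have hptbound : ∀ θ ∈ Set.Ioc (0:ℝ) 1, g θ ^ pα ≤ Cα * (1 + f θ) := by
    intro θ hθ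
    exact hbound _ (hmem θ ⟨hθ.1.le, hθ.2⟩) _
  have hgp_int : MeasureTheory.Integrable (fun θ => g θ ^ pα) μ := by
    apply MeasureTheory.Integrable.mono' hCf_int
      (hφc.comp_aestronglyMeasurable hgint.aestronglyMeasurable)
    filter_upwards [haemem] with θ hθ
    rw [Real.norm_eq_abs, abs_of_nonneg (Real.rpow_nonneg (hgnn θ) _)]
    exact hptbound θ hθ
  -- Jensen
  have hjensen : (∫ θ, g θ ∂μ) ^ pα ≤ ∫ θ, g θ ^ pα ∂μ :=
    (convexOn_rpow hpα.le).map_integral_le hφc.continuousOn isClosed_Ici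
      (MeasureTheory.ae_of_all _ fun θ => hgnn θ) hgint hgp_int
  have hA : (0:ℝ) ≤ ∫ θ in (0:ℝ)..1, g θ :=
    intervalIntegral.integral_nonneg zero_le_one fun θ _ => hgnn θ
  have hieq : (∫ θ in (0:ℝ)..1, g θ) = ∫ θ, g θ ∂μ :=
    intervalIntegral.integral_of_le zero_le_one
  have hfeq : (∫ θ in (0:ℝ)..1, f θ) = ∫ θ, f θ ∂μ :=
    intervalIntegral.integral_of_le zero_le_one
  have hstep2 : (∫ θ, g θ ^ pα ∂μ) ≤ Cα * (1 + ∫ θ, f θ ∂μ) := by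
    have h1 : (∫ θ, g θ ^ pα ∂μ) ≤ ∫ θ, Cα * (1 + f θ) ∂μ := by
      apply MeasureTheory.integral_mono_ae hgp_int hCf_int
      filter_upwards [haemem] with θ hθ using hptbound θ hθ
    have h2 : (∫ θ, Cα * (1 + f θ) ∂μ) = Cα * (1 + ∫ θ, f θ ∂μ) := by
      rw [MeasureTheory.integral_const_mul]
      congr 1
      rw [MeasureTheory.integral_add (MeasureTheory.integrable_const 1)
        (hfc.integrableOn_Ioc)]
      simp
      rfl
    rw [h2] at h1
    exact h1
  -- combine
  have hApow : (∫ θ in (0:ℝ)..1, g θ) ^ pα ≤ Cα * (1 + ∫ θ in (0:ℝ)..1, f θ) := by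
    rw [hieq, hfeq]; exact le_trans hjensen hstep2
  have hAle : (∫ θ in (0:ℝ)..1, g θ) ≤ (Cα * (1 + ∫ θ in (0:ℝ)..1, f θ)) ^ (1 / pα) := by
    have h := Real.rpow_le_rpow (Real.rpow_nonneg hA pα) hApow
      (by positivity : (0:ℝ) ≤ 1 / pα)
    rwa [← Real.rpow_mul hA, mul_one_div, div_self hp0.ne', Real.rpow_one] at h
  set B : ℝ := ∫ θ in (0:ℝ)..1, f θ with hBdef
  have hB1 : (0:ℝ) ≤ 1 + B := by linarith
  have hρsplit : ρ ^ (1 - 1 / pα) * ρ ^ (1 / pα) = ρ := by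
    rw [← Real.rpow_add hρpos]
    simp
  calc ρ * ∫ θ in (0:ℝ)..1, g θ
      ≤ ρ * (Cα * (1 + B)) ^ (1 / pα) := mul_le_mul_of_nonneg_left hAle hρ0
    _ = Cα ^ (1 / pα) * ρ ^ (1 - 1 / pα) * (ρ * (1 + B)) ^ (1 / pα) := by
        conv_lhs => rw [← hρsplit]
        rw [Real.mul_rpow hCα hB1, Real.mul_rpow hρ0 hB1]
        ring
    _ ≤ Cα ^ (1 / pα) * ρ ^ (1 - 1 / pα) * (T + ρ * B) ^ (1 / pα) := by
        apply mul_le_mul_of_nonneg_left _ (mul_nonneg (Real.rpow_nonneg hCα _)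
          (Real.rpow_nonneg hρ0 _))
        apply Real.rpow_le_rpow (mul_nonneg hρ0 hB1) _ (by positivity)
        have hexp : ρ * (1 + B) = ρ + ρ * B := by ring
        linarith
end

section
/- Under the Hölder-type bound on the first derivatives of W (with W ≥ 0), the first-order partial derivative ∂_{x₁} c_w(t,s;x,y) of c_w(t,s;x,y) = exp(-ρ∫₀¹ W(t-θρ, x-θ(x-y))dθ) is uniformly bounded: there is a constant C such that |∂_{x₁}c_w(t,s;x,y)| ≤ C for all 0 ≤ s ≤ t ≤ T and (x,y) ∈ ℝ^{2d}. -/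
/-! The exponent `I(x) = ∫₀¹ W(t - θρ, x - θ(x - y)) dθ` may be differentiated under the
integral sign along the line `x + u e₁`, and the Hölder bound together with `W ≥ 0` and `p > 1`
gives `|∂₁W| ≤ C₁^{1/p} (1 + W)`, hence `|∂₁I| ≤ C₁^{1/p} (1 + I)`. Therefore
`|∂₁c_w| = ρ e^{-ρI} |∂₁I| ≤ C₁^{1/p} (ρ + ρI e^{-ρI}) ≤ C₁^{1/p} (T + 1)`, using `z e^{-z} ≤ 1`. -/

open Set Real Function MeasureTheory

theorem abs_le_rpow_inv_mul_one_add {a w C p : ℝ} (hC : 0 ≤ C) (hp : 1 ≤ p) (hw : 0 ≤ w)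
    (h : |a| ^ p ≤ C * (1 + w)) : |a| ≤ C ^ p⁻¹ * (1 + w) :=
  calc |a| ≤ (C * (1 + w)) ^ p⁻¹ :=
        (le_rpow_inv_iff_of_pos (abs_nonneg a) (by positivity) (by positivity)).2 h
    _ = C ^ p⁻¹ * (1 + w) ^ p⁻¹ := mul_rpow hC (by positivity)
    _ ≤ C ^ p⁻¹ * (1 + w) := by
        gcongr
        exact rpow_le_self_of_one_le (by linarith) (inv_le_one_of_one_le₀ hp)

theorem exp_neg_mul_mul_one_add_le {ρ I T : ℝ} (hρ : 0 ≤ ρ) (hρT : ρ ≤ T) (hI : 0 ≤ I) :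
    exp (-ρ * I) * (ρ * (1 + I)) ≤ T + 1 := by
  have hexp : exp (-ρ * I) ≤ 1 := exp_le_one_iff.2 (by nlinarith)
  have hinv : ρ * I * exp (-ρ * I) ≤ 1 := by
    calc ρ * I * exp (-ρ * I) ≤ exp (ρ * I) * exp (-ρ * I) := by
          gcongr; linarith [add_one_le_exp (ρ * I)]
      _ = 1 := by rw [← exp_add]; simp
  nlinarith [exp_pos (-ρ * I)]

section

variable {E : Type*} [NormedAddCommGroup E] [NormedSpace ℝ E]

/-- Since `fderiv` is `0` where `f` is not differentiable, a line derivative bounds `fderiv`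
without any Fréchet differentiability of `f`. -/
theorem abs_fderiv_apply_le_of_hasLineDerivAt {f : E → ℝ} {x v : E} {a C : ℝ}
    (hf : HasLineDerivAt ℝ f a x v) (ha : |a| ≤ C) : |fderiv ℝ f x v| ≤ C := by
  by_cases hdiff : DifferentiableAt ℝ f x
  · rwa [← hdiff.lineDeriv_eq_fderiv, hf.lineDeriv]
  · simpa [fderiv_zero_of_not_differentiableAt hdiff] using (abs_nonneg a).trans ha

theorem hasDerivAt_comp_segment {φ : E → ℝ} (x y v : E) (θ u : ℝ)
    (hφ : DifferentiableAt ℝ φ (x + u • v - θ • (x + u • v - y))) :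
    HasDerivAt (fun u : ℝ => φ (x + u • v - θ • (x + u • v - y)))
      ((1 - θ) * fderiv ℝ φ (x + u • v - θ • (x + u • v - y)) v) u := by
  have hline : HasDerivAt (fun u : ℝ => x + u • v - θ • (x + u • v - y)) ((1 - θ) • v) u := by
    have h := ((hasDerivAt_id u).smul_const v).const_add x
    exact (h.sub ((h.sub_const y).const_smul θ)).congr_deriv (by simp [sub_smul])
  have h := hφ.hasFDerivAt.comp_hasDerivAt u hline
  rwa [map_smul, smul_eq_mul] at h

theorem hasDerivAt_intervalIntegral_of_norm_deriv_le [CompleteSpace E] {f : ℝ → ℝ → E}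
    {g : ℝ → ℝ → ℝ} {a b : ℝ} (hf : Continuous (uncurry f)) (hg : Continuous (uncurry g))
    (hdiff : ∀ θ ∈ uIcc a b, Differentiable ℝ (f θ))
    (hfg : ∀ θ ∈ uIcc a b, ∀ u, ‖deriv (f θ) u‖ ≤ g θ u) (u₀ : ℝ) :
    HasDerivAt (fun u => ∫ θ in a..b, f θ u) (∫ θ in a..b, deriv (f θ) u₀) u₀ := by
  obtain ⟨K, hK⟩ := ((isCompact_uIcc (a := a) (b := b)).prod
    (isCompact_closedBall u₀ 1)).exists_bound_of_continuousOn hg.continuousOn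
  have hsub : ∀ θ ∈ uIoc a b, θ ∈ uIcc a b := fun _ hθ => uIoc_subset_uIcc hθ
  have hcont : ∀ u, Continuous fun θ => f θ u := fun u => hf.comp (.prodMk_left u)
  refine (intervalIntegral.hasDerivAt_integral_of_dominated_loc_of_deriv_le (bound := fun _ => K)
    (F' := fun u θ => deriv (f θ) u) (μ := volume)
    (Metric.ball_mem_nhds u₀ one_pos) (.of_forall fun u => (hcont u).aestronglyMeasurable)
    ((hcont u₀).intervalIntegrable a b) ?_ ?_ intervalIntegrable_const ?_).2
  · exact ((stronglyMeasurable_deriv_with_param hf).comp_measurable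
      (measurable_id.prodMk measurable_const)).aestronglyMeasurable
  · refine ae_of_all _ fun θ hθ u hu => (hfg θ (hsub θ hθ) u).trans ?_
    exact (le_abs_self _).trans (hK (θ, u) ⟨hsub θ hθ, Metric.ball_subset_closedBall hu⟩)
  · exact ae_of_all _ fun θ hθ u _ => (hdiff θ (hsub θ hθ) u).hasDerivAt

theorem exists_hasLineDerivAt_segmentIntegral_abs_le {W : ℝ → E → ℝ} {τ : ℝ → ℝ} {K : ℝ} {v : E}
    (hW : Continuous fun q : ℝ × E => W q.1 q.2) (hτ : Continuous τ)
    (hWd : ∀ θ ∈ Icc (0 : ℝ) 1, Differentiable ℝ (W (τ θ)))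
    (hK : ∀ θ ∈ Icc (0 : ℝ) 1, ∀ z, |fderiv ℝ (W (τ θ)) z v| ≤ K * (1 + W (τ θ) z)) (x y : E) :
    ∃ B, HasLineDerivAt ℝ (fun x => ∫ θ in (0 : ℝ)..1, W (τ θ) (x - θ • (x - y))) B x v ∧
      |B| ≤ K * (1 + ∫ θ in (0 : ℝ)..1, W (τ θ) (x - θ • (x - y))) := by
  set f : ℝ → ℝ → ℝ := fun θ u => W (τ θ) (x + u • v - θ • (x + u • v - y)) with hf_def
  have hf : Continuous (uncurry f) := hW.comp
    (f := fun q : ℝ × ℝ => (τ q.1, x + q.2 • v - q.1 • (x + q.2 • v - y))) (by fun_prop)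
  have hθ : ∀ θ ∈ uIcc (0 : ℝ) 1, θ ∈ Icc (0 : ℝ) 1 := fun θ hθ => by
    rwa [uIcc_of_le zero_le_one] at hθ
  have hderiv : ∀ θ ∈ Icc (0 : ℝ) 1, ∀ u, |deriv (f θ) u| ≤ K * (1 + f θ u) := by
    intro θ hθ u
    rw [(hasDerivAt_comp_segment x y v θ u (hWd θ hθ _)).deriv, abs_mul]
    refine le_trans ?_ (hK θ hθ _)
    exact mul_le_of_le_one_left (abs_nonneg _) (abs_le.2 ⟨by linarith [hθ.2], by linarith [hθ.1]⟩)
  refine ⟨_, hasDerivAt_intervalIntegral_of_norm_deriv_le (g := fun θ u => K * (1 + f θ u)) hf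
    (by fun_prop) (fun θ hθ' u =>
      (hasDerivAt_comp_segment x y v θ u (hWd θ (hθ θ hθ') _)).differentiableAt)
    (fun θ hθ' => hderiv θ (hθ θ hθ')) 0, ?_⟩
  have hf0 : Continuous fun θ => f θ 0 := hf.comp (.prodMk_left 0)
  calc |∫ θ in (0 : ℝ)..1, deriv (f θ) 0| ≤ ∫ θ in (0 : ℝ)..1, K * (1 + f θ 0) := by
        rw [← Real.norm_eq_abs]
        exact intervalIntegral.norm_integral_le_of_norm_le zero_le_one
          (ae_of_all _ fun θ hθ' => hderiv θ (Ioc_subset_Icc_self hθ') 0)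
          ((by fun_prop : Continuous fun θ => K * (1 + f θ 0)).intervalIntegrable 0 1)
    _ = K * (1 + ∫ θ in (0 : ℝ)..1, W (τ θ) (x - θ • (x - y))) := by
        rw [intervalIntegral.integral_const_mul,
          intervalIntegral.integral_add intervalIntegrable_const (hf0.intervalIntegrable 0 1)]
        simp [hf_def]

end

theorem stmt4_general (d : ℕ) (hd : 0 < d) (T : ℝ)
    (W : ℝ → EuclideanSpace ℝ (Fin d) → ℝ)
    (hWcont : Continuous fun p : ℝ × EuclideanSpace ℝ (Fin d) => W p.1 p.2)
    (hWdiff : ∀ t, ContDiff ℝ 1 (W t))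
    (hWnonneg : ∀ t ∈ Set.Icc (0:ℝ) T, ∀ x, 0 ≤ W t x)
    (C₁ p : ℝ) (hC₁ : 0 ≤ C₁) (hp : 1 < p)
    (hbound : ∀ t ∈ Set.Icc (0:ℝ) T, ∀ x,
      |pd ⟨0, hd⟩ (W t) x| ^ p ≤ C₁ * (1 + W t x))
    (c_w : ℝ → ℝ → EuclideanSpace ℝ (Fin d) → EuclideanSpace ℝ (Fin d) → ℝ)
    (hc : ∀ t s x y, c_w t s x y =
      Real.exp (-(t - s) * ∫ θ in (0:ℝ)..1, W (t - θ * (t - s)) (x - θ • (x - y)))) :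
    ∃ C : ℝ, ∀ s t : ℝ, 0 ≤ s → s ≤ t → t ≤ T →
      ∀ x y : EuclideanSpace ℝ (Fin d),
        |pd ⟨0, hd⟩ (fun x' => c_w t s x' y) x| ≤ C := by
  refine ⟨C₁ ^ p⁻¹ * (T + 1), fun s t hs hst htT x y => ?_⟩
  have htime : ∀ θ ∈ Icc (0 : ℝ) 1, t - θ * (t - s) ∈ Icc 0 T := fun θ hθ =>
    ⟨by nlinarith [hθ.2], by nlinarith [hθ.1]⟩
  obtain ⟨B, hB, hBle⟩ := exists_hasLineDerivAt_segmentIntegral_abs_le hWcont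
    (by fun_prop : Continuous fun θ : ℝ => t - θ * (t - s))
    (fun θ _ => (hWdiff _).differentiable one_ne_zero)
    (fun θ hθ z => abs_le_rpow_inv_mul_one_add hC₁ hp.le (hWnonneg _ (htime θ hθ) z)
      (hbound _ (htime θ hθ) z)) x y
  set I := ∫ θ in (0 : ℝ)..1, W (t - θ * (t - s)) (x - θ • (x - y))
  have hI : 0 ≤ I := intervalIntegral.integral_nonneg zero_le_one fun θ hθ =>
    hWnonneg _ (htime θ hθ) _
  have hline : HasLineDerivAt ℝ (fun x' => c_w t s x' y) (exp (-(t - s) * I) * (-(t - s) * B)) x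
      (EuclideanSpace.single ⟨0, hd⟩ 1) := by
    have h := (HasDerivAt.const_mul (-(t - s)) hB).exp
    rw [zero_smul, add_zero] at h
    simpa only [HasLineDerivAt, hc] using h
  refine abs_fderiv_apply_le_of_hasLineDerivAt hline ?_
  calc |exp (-(t - s) * I) * (-(t - s) * B)| = exp (-(t - s) * I) * ((t - s) * |B|) := by
        rw [abs_mul, abs_exp, abs_mul, abs_neg, abs_of_nonneg (sub_nonneg.2 hst)]
    _ ≤ exp (-(t - s) * I) * ((t - s) * (C₁ ^ p⁻¹ * (1 + I))) := by
        gcongr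
    _ = C₁ ^ p⁻¹ * (exp (-(t - s) * I) * ((t - s) * (1 + I))) := by ring
    _ ≤ C₁ ^ p⁻¹ * (T + 1) := by
        gcongr
        exact exp_neg_mul_mul_one_add_le (sub_nonneg.2 hst) (by linarith) hI

theorem stmt4 (d : ℕ) (hd : 0 < d) (T : ℝ) (hT : 0 < T)
    (W : ℝ → EuclideanSpace ℝ (Fin d) → ℝ)
    (hWcont : Continuous fun p : ℝ × EuclideanSpace ℝ (Fin d) => W p.1 p.2)
    (hWdiff : ∀ t, ContDiff ℝ 1 (W t))
    (hWnonneg : ∀ t ∈ Set.Icc (0:ℝ) T, ∀ x, 0 ≤ W t x)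
    (C₁ p : ℝ) (hC₁ : 0 ≤ C₁) (hp : 1 < p)
    (hbound : ∀ t ∈ Set.Icc (0:ℝ) T, ∀ x,
      |pd ⟨0, hd⟩ (W t) x| ^ p ≤ C₁ * (1 + W t x))
    (c_w : ℝ → ℝ → EuclideanSpace ℝ (Fin d) → EuclideanSpace ℝ (Fin d) → ℝ)
    (hc : ∀ t s x y, c_w t s x y =
      Real.exp (-(t - s) * ∫ θ in (0:ℝ)..1, W (t - θ * (t - s)) (x - θ • (x - y)))) :
    ∃ C : ℝ, ∀ s t : ℝ, 0 ≤ s → s ≤ t → t ≤ T →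
      ∀ x y : EuclideanSpace ℝ (Fin d),
        |pd ⟨0, hd⟩ (fun x' => c_w t s x' y) x| ≤ C :=
  stmt4_general d hd T W hWcont hWdiff hWnonneg C₁ p hC₁ hp hbound c_w hc
end

section
/- If U(θ) solves the matrix ODE dU/dθ = -(iH(θ) + W(θ))U(θ) with U(s) = I, where H(θ) is Hermitian and W(θ) is Hermitian positive semidefinite for each θ, then for all θ ≥ s the Hermitian matrix U(θ)†U(θ) satisfies 0 ≤ U(θ)†U(θ) ≤ I in the sense of quadratic forms. -/
/-!
Since `iH` is skew-Hermitian, along a trajectory `w = U v` one has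
`d/dθ ‖w‖² = 2 Re ⟨w, -(iH + W) w⟩ = -2 ⟨w, W w⟩ ≤ 0`. Hence `‖U(θ) v‖ ≤ ‖U(s) v‖ = ‖v‖`,
i.e. `U(θ)` is a contraction, which is the statement `U(θ)ᴴ U(θ) ≤ 1`.
-/

open Matrix ComplexOrder
open scoped RealInnerProductSpace

theorem antitoneOn_norm_of_inner_deriv_nonpos {E : Type*} [NormedAddCommGroup E]
    [InnerProductSpace ℝ E] {f f' : ℝ → E} {a b : ℝ}
    (hf : ∀ x ∈ Set.Icc a b, HasDerivAt f (f' x) x) (hf' : ∀ x ∈ Set.Icc a b, ⟪f x, f' x⟫ ≤ 0) :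
    AntitoneOn (fun x => ‖f x‖) (Set.Icc a b) := by
  have hsq : AntitoneOn (fun x => ‖f x‖ ^ 2) (Set.Icc a b) :=
    antitoneOn_of_hasDerivWithinAt_nonpos (convex_Icc a b)
      (fun x hx => (hf x hx).norm_sq.continuousAt.continuousWithinAt)
      (fun x hx => (hf x (interior_subset hx)).norm_sq.hasDerivWithinAt)
      (fun x hx => by nlinarith [hf' x (interior_subset hx)])
  exact fun x hx y hy hxy =>
    (pow_le_pow_iff_left₀ (norm_nonneg _) (norm_nonneg _) two_ne_zero).1 (hsq hx hy hxy)

theorem EuclideanSpace.real_inner_toLp_toLp {ι : Type*} [Fintype ι] (x y : ι → ℂ) :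
    ⟪WithLp.toLp 2 x, WithLp.toLp 2 y⟫ = (star x ⬝ᵥ y).re := by
  simp [PiLp.inner_apply, Complex.inner, dotProduct, Complex.re_sum, mul_comm]

theorem Matrix.re_star_dotProduct_mulVec_nonpos_of_dissipative {n : Type*} [Fintype n]
    {H W : Matrix n n ℂ} (hH : H.IsHermitian) (hW : W.PosSemidef) (x : n → ℂ) :
    (star x ⬝ᵥ (-(Complex.I • H + W)) *ᵥ x).re ≤ 0 := by
  have hHx : (star x ⬝ᵥ H *ᵥ x).im = 0 := hH.im_star_dotProduct_mulVec_self x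
  have hWx : 0 ≤ (star x ⬝ᵥ W *ᵥ x).re := hW.re_dotProduct_nonneg x
  simp only [neg_mulVec, add_mulVec, smul_mulVec, dotProduct_neg, dotProduct_add,
    dotProduct_smul, smul_eq_mul, Complex.neg_re, Complex.add_re, Complex.I_mul_re]
  linarith

theorem Matrix.hasDerivAt_toLp_mulVec {m n 𝕜 : Type*} [Fintype m] [Fintype n] [RCLike 𝕜]
    {U : ℝ → Matrix m n 𝕜} {U' : Matrix m n 𝕜} {x : ℝ}
    (hU : ∀ i j, HasDerivAt (fun τ => U τ i j) (U' i j) x) (v : n → 𝕜) :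
    HasDerivAt (fun τ => WithLp.toLp 2 (U τ *ᵥ v)) (WithLp.toLp 2 (U' *ᵥ v)) x := by
  have : HasDerivAt (fun τ => U τ *ᵥ v) (U' *ᵥ v) x :=
    hasDerivAt_pi.2 fun i => HasDerivAt.fun_sum fun j _ => (hU i j).mul_const (v j)
  exact (PiLp.continuousLinearEquiv 2 ℝ (fun _ : m => 𝕜)).symm.hasFDerivAt.comp_hasDerivAt x this

theorem Matrix.star_dotProduct_conjTranspose_mul_self_mulVec {m n 𝕜 : Type*} [Fintype m]
    [Fintype n] [RCLike 𝕜] (A : Matrix m n 𝕜) (v : n → 𝕜) :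
    star v ⬝ᵥ (Aᴴ * A) *ᵥ v = ((‖WithLp.toLp 2 (A *ᵥ v)‖ ^ 2 : ℝ) : 𝕜) := by
  rw [← mulVec_mulVec, dotProduct_mulVec, ← star_mulVec, dotProduct_comm, RCLike.ofReal_pow,
    ← inner_self_eq_norm_sq_to_K]
  rfl

theorem Matrix.posSemidef_one_sub_conjTranspose_mul_self {n 𝕜 : Type*} [Fintype n] [DecidableEq n]
    [RCLike 𝕜] {A : Matrix n n 𝕜} (hA : ∀ v, ‖WithLp.toLp 2 (A *ᵥ v)‖ ≤ ‖WithLp.toLp 2 v‖) :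
    (1 - Aᴴ * A).PosSemidef := by
  refine .of_dotProduct_mulVec_nonneg (isHermitian_one.sub (isHermitian_conjTranspose_mul_self A))
    fun v => ?_
  have hv := star_dotProduct_conjTranspose_mul_self_mulVec (1 : Matrix n n 𝕜) v
  rw [conjTranspose_one, mul_one, one_mulVec] at hv
  rw [sub_mulVec, dotProduct_sub, one_mulVec, hv, star_dotProduct_conjTranspose_mul_self_mulVec,
    ← RCLike.ofReal_sub, RCLike.ofReal_nonneg, sub_nonneg]
  exact pow_le_pow_left₀ (norm_nonneg _) (hA v) 2

theorem stmt5_general (l : ℕ) (s t : ℝ)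
    (H W : ℝ → Matrix (Fin l) (Fin l) ℂ)
    (hH : ∀ θ ∈ Set.Icc s t, (H θ).IsHermitian)
    (hW : ∀ θ ∈ Set.Icc s t, (W θ).PosSemidef)
    (U : ℝ → Matrix (Fin l) (Fin l) ℂ)
    (hU0 : U s = 1)
    (hU : ∀ θ ∈ Set.Icc s t, ∀ i j,
      HasDerivAt (fun τ => U τ i j) ((-(Complex.I • H θ + W θ) * U θ) i j) θ) :
    ∀ θ ∈ Set.Icc s t,
      ((U θ)ᴴ * U θ).PosSemidef ∧ ((1 : Matrix (Fin l) (Fin l) ℂ) - (U θ)ᴴ * U θ).PosSemidef := by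
  intro θ hθ
  refine ⟨posSemidef_conjTranspose_mul_self _, posSemidef_one_sub_conjTranspose_mul_self fun v => ?_⟩
  have hdecay : AntitoneOn (fun τ => ‖WithLp.toLp 2 (U τ *ᵥ v)‖) (Set.Icc s t) :=
    antitoneOn_norm_of_inner_deriv_nonpos (fun x hx => hasDerivAt_toLp_mulVec (hU x hx) v)
      fun x hx => by
        rw [EuclideanSpace.real_inner_toLp_toLp, ← mulVec_mulVec]
        exact re_star_dotProduct_mulVec_nonpos_of_dissipative (hH x hx) (hW x hx) _
  simpa [hU0] using hdecay ⟨le_rfl, hθ.1.trans hθ.2⟩ hθ hθ.1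

theorem stmt5 (l : ℕ) (hl : 1 ≤ l) (s t : ℝ) (hst : s ≤ t)
    (H W : ℝ → Matrix (Fin l) (Fin l) ℂ)
    (hHcont : ∀ i j, ContinuousOn (fun θ => H θ i j) (Set.Icc s t))
    (hWcont : ∀ i j, ContinuousOn (fun θ => W θ i j) (Set.Icc s t))
    (hH : ∀ θ ∈ Set.Icc s t, (H θ).IsHermitian)
    (hW : ∀ θ ∈ Set.Icc s t, (W θ).PosSemidef)
    (U : ℝ → Matrix (Fin l) (Fin l) ℂ)
    (hU0 : U s = 1)
    (hU : ∀ θ ∈ Set.Icc s t, ∀ i j,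
      HasDerivAt (fun τ => U τ i j) ((-(Complex.I • H θ + W θ) * U θ) i j) θ) :
    ∀ θ ∈ Set.Icc s t,
      ((U θ)ᴴ * U θ).PosSemidef ∧ ((1 : Matrix (Fin l) (Fin l) ℂ) - (U θ)ᴴ * U θ).PosSemidef :=
  stmt5_general l s t H W hH hW U hU0 hU
end

section
/- Under the hypotheses on H and W, the derivative of θ ↦ U(θ)†U(θ) equals -2 U(θ)†W(θ)U(θ), which is negative semidefinite; hence θ ↦ ⟨U(θ)†U(θ)v, v⟩ is nonincreasing for each fixed vector v ∈ ℂ^l. -/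
open Matrix ComplexOrder

/-!
Writing `U' = -K U` with `K = iH + W`, the product rule gives
`(UᴴU)' = -Uᴴ (Kᴴ + K) U`, and `Kᴴ + K = 2W` because `H` and `W` are Hermitian.
The congruence `UᴴWU` of the positive semidefinite `W` is again positive semidefinite, so every
quadratic form `v ↦ ⟨UᴴU v, v⟩` has a nonpositive derivative and is therefore nonincreasing.
-/

theorem antitoneOn_of_hasDerivAt_nonpos {D : Set ℝ} (hD : Convex ℝ D) {f f' : ℝ → ℝ}
    (hf : ∀ x ∈ D, HasDerivAt f (f' x) x) (hf' : ∀ x ∈ D, f' x ≤ 0) : AntitoneOn f D :=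
  antitoneOn_of_hasDerivWithinAt_nonpos hD
    (fun x hx => (hf x hx).continuousAt.continuousWithinAt)
    (fun x hx => (hf x (interior_subset hx)).hasDerivWithinAt)
    (fun x hx => hf' x (interior_subset hx))

namespace Matrix

section EntrywiseDeriv

variable {𝕜 : Type*} [RCLike 𝕜] {m n p : Type*} {θ : ℝ}

theorem hasDerivAt_conjTranspose_apply {A : ℝ → Matrix m n 𝕜} {A' : Matrix m n 𝕜}
    (hA : ∀ i j, HasDerivAt (fun τ => A τ i j) (A' i j) θ) (i : n) (j : m) :
    HasDerivAt (fun τ => (A τ)ᴴ i j) (A'ᴴ i j) θ :=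
  (hA j i).star

theorem hasDerivAt_mul_apply [Fintype n] {A : ℝ → Matrix m n 𝕜} {B : ℝ → Matrix n p 𝕜}
    {A' : Matrix m n 𝕜} {B' : Matrix n p 𝕜}
    (hA : ∀ i j, HasDerivAt (fun τ => A τ i j) (A' i j) θ)
    (hB : ∀ i j, HasDerivAt (fun τ => B τ i j) (B' i j) θ) (i : m) (k : p) :
    HasDerivAt (fun τ => (A τ * B τ) i k) ((A' * B θ + A θ * B') i k) θ := by
  simp only [mul_apply, add_apply, ← Finset.sum_add_distrib]
  exact HasDerivAt.fun_sum fun j _ => (hA i j).mul (hB j k)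

theorem hasDerivAt_dotProduct_mulVec [Fintype n] {M : ℝ → Matrix n n 𝕜} {M' : Matrix n n 𝕜}
    (hM : ∀ i j, HasDerivAt (fun τ => M τ i j) (M' i j) θ) (v : n → 𝕜) :
    HasDerivAt (fun τ => star v ⬝ᵥ (M τ *ᵥ v)) (star v ⬝ᵥ (M' *ᵥ v)) θ := by
  simp only [dotProduct, mulVec, Finset.mul_sum]
  exact HasDerivAt.fun_sum fun i _ => HasDerivAt.fun_sum fun j _ =>
    ((hM i j).mul_const (v j)).const_mul (star v i)

end EntrywiseDeriv

theorem conjTranspose_add_self_of_isHermitian {n : Type*} {H W : Matrix n n ℂ}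
    (hH : H.IsHermitian) (hW : W.IsHermitian) :
    (Complex.I • H + W)ᴴ + (Complex.I • H + W) = (2 : ℂ) • W := by
  rw [conjTranspose_add, conjTranspose_smul, hH.eq, hW.eq, Complex.star_def, Complex.conj_I]
  module

theorem re_dotProduct_neg_smul_mulVec_nonpos {n : Type*} [Fintype n] {P : Matrix n n ℂ}
    (hP : P.PosSemidef) {c : ℝ} (hc : 0 ≤ c) (v : n → ℂ) :
    (star v ⬝ᵥ ((-(c : ℂ) • P) *ᵥ v)).re ≤ 0 := by
  rw [smul_mulVec, dotProduct_smul, smul_eq_mul, neg_mul, Complex.neg_re, Complex.re_ofReal_mul,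
    neg_nonpos]
  exact mul_nonneg hc (hP.re_dotProduct_nonneg v)

theorem hasDerivAt_conjTranspose_mul_self_apply {n : Type*} [Fintype n] {θ : ℝ}
    {U : ℝ → Matrix n n ℂ} {H W : Matrix n n ℂ} (hH : H.IsHermitian) (hW : W.IsHermitian)
    (hU : ∀ i j, HasDerivAt (fun τ => U τ i j) ((-(Complex.I • H + W) * U θ) i j) θ) (i j : n) :
    HasDerivAt (fun τ => ((U τ)ᴴ * U τ) i j) (((-2 : ℂ) • ((U θ)ᴴ * W * U θ)) i j) θ := by
  set K := Complex.I • H + W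
  have hK : (-K * U θ)ᴴ * U θ + (U θ)ᴴ * (-K * U θ) = (-2 : ℂ) • ((U θ)ᴴ * W * U θ) :=
    calc (-K * U θ)ᴴ * U θ + (U θ)ᴴ * (-K * U θ) = -((U θ)ᴴ * (Kᴴ + K) * U θ) := by
          simp only [conjTranspose_mul, conjTranspose_neg, Matrix.mul_add, Matrix.add_mul,
            Matrix.neg_mul, Matrix.mul_neg, Matrix.mul_assoc, neg_add]
      _ = (-2 : ℂ) • ((U θ)ᴴ * W * U θ) := by
          rw [conjTranspose_add_self_of_isHermitian hH hW, Matrix.mul_smul, Matrix.smul_mul,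
            ← neg_smul]
  rw [← hK]
  exact hasDerivAt_mul_apply (hasDerivAt_conjTranspose_apply hU) hU i j

end Matrix

theorem stmt6_general (l : ℕ) (s t : ℝ)
    (H W : ℝ → Matrix (Fin l) (Fin l) ℂ)
    (hH : ∀ θ ∈ Set.Icc s t, (H θ).IsHermitian)
    (hW : ∀ θ ∈ Set.Icc s t, (W θ).PosSemidef)
    (U : ℝ → Matrix (Fin l) (Fin l) ℂ)
    (hU : ∀ θ ∈ Set.Icc s t, ∀ i j,
      HasDerivAt (fun τ => U τ i j) ((-(Complex.I • H θ + W θ) * U θ) i j) θ) :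
    (∀ θ ∈ Set.Icc s t, ∀ i j,
      HasDerivAt (fun τ => ((U τ)ᴴ * U τ) i j)
        (((-2 : ℂ) • ((U θ)ᴴ * W θ * U θ)) i j) θ) ∧
    (∀ θ ∈ Set.Icc s t, ((U θ)ᴴ * W θ * U θ).PosSemidef) ∧
    (∀ v : Fin l → ℂ, AntitoneOn
      (fun θ => (star v ⬝ᵥ (((U θ)ᴴ * U θ) *ᵥ v)).re) (Set.Icc s t)) := by
  have hGram : ∀ θ ∈ Set.Icc s t, ∀ i j,
      HasDerivAt (fun τ => ((U τ)ᴴ * U τ) i j)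
        (((-2 : ℂ) • ((U θ)ᴴ * W θ * U θ)) i j) θ :=
    fun θ hθ => hasDerivAt_conjTranspose_mul_self_apply (hH θ hθ) (hW θ hθ).1 (hU θ hθ)
  have hPSD : ∀ θ ∈ Set.Icc s t, ((U θ)ᴴ * W θ * U θ).PosSemidef :=
    fun θ hθ => (hW θ hθ).conjTranspose_mul_mul_same (U θ)
  refine ⟨hGram, hPSD, fun v => antitoneOn_of_hasDerivAt_nonpos (convex_Icc s t)
    (fun θ hθ => Complex.reCLM.hasFDerivAt.comp_hasDerivAt θ
      (hasDerivAt_dotProduct_mulVec (hGram θ hθ) v)) ?_⟩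
  intro θ hθ
  exact_mod_cast re_dotProduct_neg_smul_mulVec_nonpos (hPSD θ hθ) zero_le_two v

theorem stmt6 (l : ℕ) (hl : 1 ≤ l) (s t : ℝ) (hst : s ≤ t)
    (H W : ℝ → Matrix (Fin l) (Fin l) ℂ)
    (hHcont : ∀ i j, ContinuousOn (fun θ => H θ i j) (Set.Icc s t))
    (hWcont : ∀ i j, ContinuousOn (fun θ => W θ i j) (Set.Icc s t))
    (hH : ∀ θ ∈ Set.Icc s t, (H θ).IsHermitian)
    (hW : ∀ θ ∈ Set.Icc s t, (W θ).PosSemidef)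
    (U : ℝ → Matrix (Fin l) (Fin l) ℂ)
    (hU0 : U s = 1)
    (hU : ∀ θ ∈ Set.Icc s t, ∀ i j,
      HasDerivAt (fun τ => U τ i j) ((-(Complex.I • H θ + W θ) * U θ) i j) θ) :
    (∀ θ ∈ Set.Icc s t, ∀ i j,
      HasDerivAt (fun τ => ((U τ)ᴴ * U τ) i j)
        (((-2 : ℂ) • ((U θ)ᴴ * W θ * U θ)) i j) θ) ∧
    (∀ θ ∈ Set.Icc s t, ((U θ)ᴴ * W θ * U θ).PosSemidef) ∧
    (∀ v : Fin l → ℂ, AntitoneOn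
      (fun θ => (star v ⬝ᵥ (((U θ)ᴴ * U θ) *ᵥ v)).re) (Set.Icc s t)) :=
  stmt6_general l s t H W hH hW U hU
end
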